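/- arXiv:hep-th/0209192 — 6 statements merged into one kernel-verified Lean document; each statement's English description precedes it below -/
import Mathlib

section
/- On a Kähler manifold, letting L* denote the adjoint of exterior multiplication by the Kähler form, for any unit complex number b one has the conjugation identity e^{ibL*} ∂̄ e^{−ibL*} = ∂̄ + b∂* = P. -/
/-!
Put `x = i b Λ`. The first Kähler identity says `⁅x, ∂̄⁆ = b ∂*`, and the second that `x` commutes
with `∂*`, so `(ad x)² ∂̄ = 0`. Left and right multiplication by `x` commute, hence conjugation by
`e^x` is `e^{ad x}`, whose series applied to `∂̄` stops after the linear term: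
`e^x ∂̄ e^{-x} = ∂̄ + ⁅x, ∂̄⁆ = ∂̄ + b ∂*`.
-/

open Finset LinearMap LieAlgebra

attribute [local instance] LieRing.ofAssociativeRing LieAlgebra.ofAssociativeAlgebra

namespace IsNilpotent

variable {A : Type*} [Ring A]

theorem exp_eq_sum_inv_factorial_smul (𝕜 : Type*) [DivisionRing 𝕜] [CharZero 𝕜] [Module ℚ A]
    [Module 𝕜 A] {a : A} {N : ℕ} (h : a ^ N = 0) :
    exp a = ∑ k ∈ range N, (k.factorial : 𝕜)⁻¹ • a ^ k := by
  rw [exp_eq_sum h]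
  refine sum_congr rfl fun k _ => ?_
  simpa using (ratCast_smul_eq 𝕜 ℚ (k.factorial : ℚ)⁻¹ (a ^ k)).symm

variable [Algebra ℚ A] {a : A}

theorem exp_mulLeft (ha : IsNilpotent a) : exp (mulLeft ℚ a) = mulLeft ℚ (exp a) :=
  (map_exp ha (Algebra.lmul ℚ A)).symm

theorem exp_mulRight (ha : IsNilpotent a) : exp (mulRight ℚ a) = mulRight ℚ (exp a) := by
  obtain ⟨N, hN⟩ := ha
  have hR : mulRight ℚ a ^ N = 0 := by rw [pow_mulRight, hN, mulRight_zero_eq_zero]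
  ext y
  simp [exp_eq_sum hN, exp_eq_sum hR, pow_mulRight, mul_sum]

theorem exp_mul_mul_exp_neg_eq_exp_ad (ha : IsNilpotent a) (y : A) :
    exp a * y * exp (-a) = exp (ad ℚ A a) y := by
  have hL : IsNilpotent (mulLeft ℚ a) := (isNilpotent_mulLeft_iff ℚ a).2 ha
  have hR : IsNilpotent (mulRight ℚ (-a)) := (isNilpotent_mulRight_iff ℚ (-a)).2 ha.neg
  have had : ad ℚ A a = mulLeft ℚ a + mulRight ℚ (-a) := by
    rw [ad_eq_lmul_left_sub_lmul_right]
    ext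
    simp [sub_eq_add_neg]
  rw [had, exp_add_of_commute (commute_mulLeft_right a (-a)) hL hR, exp_mulLeft ha,
    exp_mulRight ha.neg, Module.End.mul_apply, mulLeft_apply, mulRight_apply, mul_assoc]

theorem exp_mul_mul_exp_neg_of_lie_lie_eq_zero {y : A} (ha : IsNilpotent a)
    (h : ⁅a, ⁅a, y⁆⁆ = 0) : exp a * y * exp (-a) = y + ⁅a, y⁆ := by
  rw [exp_mul_mul_exp_neg_eq_exp_ad ha, ← Module.End.smul_def,
    exp_smul_eq_sum (k := 2) _ (ad_nilpotent_of_nilpotent ha)]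
  · simp [sum_range_succ]
  · simpa [pow_two] using h

end IsNilpotent

theorem exp_conjugation_dbar_eq_P_general
    {A : Type*} [Ring A] [Algebra ℂ A]
    (db ps Λ : A) (b : ℂ)
    (N : ℕ) (hnil : Λ ^ N = 0)
    (hKahler1 : ps = -Complex.I • (db * Λ - Λ * db))
    (hKahler2 : ps * Λ = Λ * ps) :
    (∑ k ∈ Finset.range N, (k.factorial : ℂ)⁻¹ • ((Complex.I * b) • Λ) ^ k) * db *
      (∑ k ∈ Finset.range N, (k.factorial : ℂ)⁻¹ • ((-(Complex.I * b)) • Λ) ^ k)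
    = db + b • ps := by
  let _ : Algebra ℚ A := Algebra.compHom A (algebraMap ℚ ℂ)
  set x := (Complex.I * b) • Λ
  have hxN : x ^ N = 0 := by rw [smul_pow, hnil, smul_zero]
  have hlie : ⁅x, db⁆ = b • ps := by
    rw [Ring.lie_def, hKahler1, smul_mul_assoc, mul_smul_comm]
    module
  have hlie_lie : ⁅x, b • ps⁆ = 0 := by
    rw [Ring.lie_def, smul_mul_smul_comm, smul_mul_smul_comm, hKahler2, mul_comm b, sub_self]
  rw [neg_smul, ← IsNilpotent.exp_eq_sum_inv_factorial_smul ℂ hxN,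
    ← IsNilpotent.exp_eq_sum_inv_factorial_smul ℂ (by rw [neg_pow, hxN, mul_zero]),
    IsNilpotent.exp_mul_mul_exp_neg_of_lie_lie_eq_zero ⟨N, hxN⟩ (by rw [hlie, hlie_lie]), hlie]

/-- On a Kähler manifold, with `db = ∂̄`, `ps = ∂*`, and `Λ = L*` the adjoint Lefschetz
operator (nilpotent on forms: `Λ^N = 0`), the Kähler identities `∂* = [∂̄, −iΛ]` and
`[∂*, Λ] = 0` give the conjugation identity `e^{ibΛ} ∂̄ e^{−ibΛ} = ∂̄ + b∂* = P` for any
unit complex number `b`.  Since `Λ` is nilpotent the exponentials are the finite sums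
`∑_{k<N} (ibΛ)^k / k!`. -/
theorem exp_conjugation_dbar_eq_P
    {A : Type*} [Ring A] [Algebra ℂ A]
    (db ps Λ : A) (b : ℂ) (hb : ‖b‖ = 1)
    (N : ℕ) (hnil : Λ ^ N = 0)
    (hKahler1 : ps = -Complex.I • (db * Λ - Λ * db))
    (hKahler2 : ps * Λ = Λ * ps) :
    (∑ k ∈ Finset.range N, (k.factorial : ℂ)⁻¹ • ((Complex.I * b) • Λ) ^ k) * db *
      (∑ k ∈ Finset.range N, (k.factorial : ℂ)⁻¹ • ((-(Complex.I * b)) • Λ) ^ k)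
    = db + b • ps :=
  exp_conjugation_dbar_eq_P_general db ps Λ b N hnil hKahler1 hKahler2
end

section
/- Let θ = (θ^{ij}) be a constant antisymmetric real n×n matrix. For a formal power series/polynomial f(x), define its flat lift f̂ = f(x^j + θ^{jk} ∂_k) as a formal differential operator (the unique operator in the kernel of all ad(x^i) + θ-deformations with zeroth-order term f). Then the composition of differential operators f̂ ∘ ĥ is again a flat lift, and its zeroth-order term equals the Moyal product f ⋆ h = Σ_{k≥0} (1/k!) Σ_{|I|=|J|=k} θ^{IJ} f_I h_J, where θ^{IJ} = θ^{i₁j₁}⋯θ^{i_k j_k}, f_I = ∂_I f, h_J = ∂_J h. -/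
open MvPolynomial

noncomputable section

/-- Composition of the partial derivatives `∂_{I 0} ∘ ⋯ ∘ ∂_{I (k-1)}` as an
endomorphism of the polynomial ring. -/
def pderivComp {n k : ℕ} (I : Fin k → Fin n) :
    Module.End ℝ (MvPolynomial (Fin n) ℝ) :=
  (List.ofFn fun i => ((pderiv (I i)).toLinearMap :
     Module.End ℝ (MvPolynomial (Fin n) ℝ))).prod

/-- The deformed derivation `D^j = θ^{jk} ∂_k`. -/
def Dop {n : ℕ} (θ : Fin n → Fin n → ℝ) (j : Fin n) :
    Module.End ℝ (MvPolynomial (Fin n) ℝ) :=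
  ∑ m : Fin n, θ j m • ((pderiv m).toLinearMap :
     Module.End ℝ (MvPolynomial (Fin n) ℝ))

/-- `∏_i D^{I i}`. -/
def DComp {n k : ℕ} (θ : Fin n → Fin n → ℝ) (I : Fin k → Fin n) :
    Module.End ℝ (MvPolynomial (Fin n) ℝ) :=
  (List.ofFn fun i => Dop θ (I i)).prod

/-- The flat lift `f̂ = f(x + θ∂) = Σ_I (1/|I|!) (∂_I f)(x) · D^I`, the unique formal
differential operator commuting with the deformed constraints whose zeroth-order term
is `f`. -/
def flatLift {n : ℕ} (θ : Fin n → Fin n → ℝ) (f : MvPolynomial (Fin n) ℝ) :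
    Module.End ℝ (MvPolynomial (Fin n) ℝ) :=
  ∑ k ∈ Finset.range (f.totalDegree + 1),
    (k.factorial : ℝ)⁻¹ •
      ∑ I : Fin k → Fin n,
        (LinearMap.mulLeft ℝ (pderivComp I f)) * DComp θ I

/-- The `k`-th term of the Moyal product. -/
def moyalTerm {n : ℕ} (θ : Fin n → Fin n → ℝ) (k : ℕ)
    (f h : MvPolynomial (Fin n) ℝ) : MvPolynomial (Fin n) ℝ :=
  (k.factorial : ℝ)⁻¹ •
    ∑ I : Fin k → Fin n, ∑ J : Fin k → Fin n,
      (∏ i, θ (I i) (J i)) • ((pderivComp I f) * (pderivComp J h))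

/-- The Moyal product `f ⋆ h = Σ_k (1/k!) Σ_{|I|=|J|=k} θ^{IJ} f_I h_J`. -/
def moyal {n : ℕ} (θ : Fin n → Fin n → ℝ) (f h : MvPolynomial (Fin n) ℝ) :
    MvPolynomial (Fin n) ℝ :=
  ∑ k ∈ Finset.range (f.totalDegree + 1), moyalTerm θ k f h

end

/-! The Moyal product is the flat lift applied to a function, `f ⋆ h = f̂ h`: expanding
`D^I = Σ_J θ^{IJ} ∂_J` turns `Σ_I (1/|I|!) (∂_I f) D^I h` into the double sum defining `f ⋆ h`.
So it suffices to show `f̂ ∘ ĥ = (f̂ h)^`, by induction on `f`. The flat lift is linear, sends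
constants to scalars and satisfies `(x^j g)^ = x^j ĝ + ĝ D^j`; and since `D^j` is a derivation
commuting with all `∂_i` and `D^i`, `D^j ĥ = ĥ D^j + (D^j h)^`. Both rules are proved degree by
degree from the recursion `Σ_{|I|=k+1} (∂_I f) D^I = Σ_i (Σ_{|I|=k} (∂_I ∂_i f) D^I) D^i`.
Evaluating at `1` gives `f ⋆ h`, as `D^I 1 = 0` for `I ≠ ∅`. -/

lemma MvPolynomial.pderiv_pderiv_comm {σ R : Type*} [CommRing R] (i j : σ)
    (p : MvPolynomial σ R) : pderiv i (pderiv j p) = pderiv j (pderiv i p) := by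
  classical
  have h : ⁅pderiv i, pderiv j⁆ = (0 : Derivation R (MvPolynomial σ R) (MvPolynomial σ R)) :=
    derivation_ext fun k => by
      rw [Derivation.commutator_apply]
      simp [pderiv_X, Pi.single_apply, apply_ite]
  rw [← sub_eq_zero, ← Derivation.commutator_apply, h, Derivation.zero_apply]

lemma MvPolynomial.totalDegree_pderiv_le {σ R : Type*} [CommSemiring R] (i : σ)
    (p : MvPolynomial σ R) : (pderiv i p).totalDegree ≤ p.totalDegree - 1 := by
  classical
  refine Finset.sup_le fun m hm => ?_
  have hcoeff : coeff (m + Finsupp.single i 1) p ≠ 0 :=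
    left_ne_zero_of_mul (coeff_pderiv (i := i) p m ▸ mem_support_iff.mp hm)
  have hdeg := le_totalDegree (mem_support_iff.mpr hcoeff)
  rw [Finsupp.sum_add_index' (fun _ => rfl) (fun _ _ _ => rfl),
    Finsupp.sum_single_index rfl] at hdeg
  omega

lemma Fin.sum_univ_fun_snoc {M α : Type*} [AddCommMonoid M] [Fintype α] {k : ℕ}
    (F : (Fin (k + 1) → α) → M) :
    ∑ I, F I = ∑ I : Fin k → α, ∑ i, F (Fin.snoc I i) := by
  rw [← (Fin.snocEquiv fun _ => α).sum_comp, Fintype.sum_prod_type_right]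
  rfl

lemma inv_factorial_succ_smul_succ_nsmul {M : Type*} [AddCommMonoid M] [Module ℝ M]
    (k : ℕ) (x : M) :
    ((k + 1).factorial : ℝ)⁻¹ • ((k + 1) • x) = (k.factorial : ℝ)⁻¹ • x := by
  rw [← Nat.cast_smul_eq_nsmul ℝ, smul_smul, Nat.factorial_succ, Nat.cast_mul, mul_inv,
    mul_right_comm, inv_mul_cancel₀ (by positivity), one_mul]

section FlatLift

variable {n : ℕ}

lemma pderivComp_zero (I : Fin 0 → Fin n) : pderivComp I = 1 := by
  simp [pderivComp]

lemma pderivComp_snoc {k : ℕ} (I : Fin k → Fin n) (i : Fin n) :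
    pderivComp (Fin.snoc I i : Fin (k + 1) → Fin n) =
      pderivComp I * (pderiv i).toLinearMap := by
  rw [pderivComp, List.ofFn_succ', List.prod_concat]
  simp [pderivComp]

variable (θ : Fin n → Fin n → ℝ)

lemma DComp_zero (I : Fin 0 → Fin n) : DComp θ I = 1 := by
  simp [DComp]

lemma DComp_snoc {k : ℕ} (I : Fin k → Fin n) (i : Fin n) :
    DComp θ (Fin.snoc I i : Fin (k + 1) → Fin n) = DComp θ I * Dop θ i := by
  rw [DComp, List.ofFn_succ', List.prod_concat]
  simp [DComp]

lemma Dop_apply (j : Fin n) (p : MvPolynomial (Fin n) ℝ) :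
    Dop θ j p = ∑ m, θ j m • pderiv m p := by
  simp [Dop]

lemma Dop_leibniz (j : Fin n) (p q : MvPolynomial (Fin n) ℝ) :
    Dop θ j (p * q) = Dop θ j p * q + p * Dop θ j q := by
  simp only [Dop_apply, pderiv_mul, smul_add, Finset.sum_add_distrib, Finset.sum_mul,
    Finset.mul_sum, smul_mul_assoc, mul_smul_comm]

lemma Dop_apply_one (j : Fin n) : Dop θ j 1 = 0 := by
  simp [Dop_apply]

lemma pderiv_Dop_comm (i j : Fin n) (p : MvPolynomial (Fin n) ℝ) :
    pderiv i (Dop θ j p) = Dop θ j (pderiv i p) := by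
  simp [Dop_apply, pderiv_pderiv_comm i]

lemma Dop_commute (i j : Fin n) : Commute (Dop θ i) (Dop θ j) := by
  refine LinearMap.ext fun p => ?_
  simp only [Module.End.mul_apply, Dop_apply, map_sum, map_smul, Finset.smul_sum, smul_smul]
  rw [Finset.sum_comm]
  simp only [pderiv_pderiv_comm _ (_ : Fin n) p, mul_comm]

lemma DComp_eq_sum {k : ℕ} (I : Fin k → Fin n) :
    DComp θ I = ∑ J : Fin k → Fin n, (∏ c, θ (I c) (J c)) • pderivComp J := by
  induction k with
  | zero => simp [DComp_zero, pderivComp_zero]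
  | succ k ih =>
    rw [← Fin.snoc_init_self I, DComp_snoc, ih, Dop, Finset.sum_mul_sum, Fin.sum_univ_fun_snoc]
    simp [Fin.prod_univ_castSucc, pderivComp_snoc, smul_smul, Fin.init, mul_comm]

lemma totalDegree_Dop_le (j : Fin n) (p : MvPolynomial (Fin n) ℝ) :
    (Dop θ j p).totalDegree ≤ p.totalDegree := by
  rw [Dop_apply]
  refine (totalDegree_finsetSum _ _).trans (Finset.sup_le fun m _ => ?_)
  exact (totalDegree_smul_le _ _).trans ((totalDegree_pderiv_le m p).trans (Nat.sub_le _ _))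

/-- `f ↦ Σ_{|I| = k} (∂_I f) D^I`, the degree-`k` part of the flat lift without its `1/k!`. -/
noncomputable def flatLiftTerm (k : ℕ) :
    MvPolynomial (Fin n) ℝ →ₗ[ℝ] Module.End ℝ (MvPolynomial (Fin n) ℝ) :=
  ∑ I : Fin k → Fin n,
    LinearMap.mulRight ℝ (DComp θ I) ∘ₗ LinearMap.mul ℝ _ ∘ₗ pderivComp I

variable {θ}

lemma flatLiftTerm_apply (k : ℕ) (f : MvPolynomial (Fin n) ℝ) :
    flatLiftTerm θ k f =
      ∑ I : Fin k → Fin n, LinearMap.mulLeft ℝ (pderivComp I f) * DComp θ I := by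
  simp only [flatLiftTerm, LinearMap.coe_sum, LinearMap.coe_comp, Finset.sum_apply,
    Function.comp_apply, LinearMap.mulRight_apply]
  rfl

lemma flatLiftTerm_zero (f : MvPolynomial (Fin n) ℝ) :
    flatLiftTerm θ 0 f = LinearMap.mulLeft ℝ f := by
  simp [flatLiftTerm_apply, pderivComp_zero, DComp_zero]

lemma flatLiftTerm_succ (k : ℕ) (f : MvPolynomial (Fin n) ℝ) :
    flatLiftTerm θ (k + 1) f = ∑ i, flatLiftTerm θ k (pderiv i f) * Dop θ i := by
  simp only [flatLiftTerm_apply, Fin.sum_univ_fun_snoc, pderivComp_snoc, DComp_snoc,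
    Finset.sum_mul, mul_assoc, Module.End.mul_apply]
  exact Finset.sum_comm

lemma flatLiftTerm_succ_apply_one (k : ℕ) (f : MvPolynomial (Fin n) ℝ) :
    flatLiftTerm θ (k + 1) f 1 = 0 := by
  simp [flatLiftTerm_succ, Dop_apply_one]

lemma flatLiftTerm_eq_zero_of_totalDegree_lt {k : ℕ} {f : MvPolynomial (Fin n) ℝ}
    (hf : f.totalDegree < k) : flatLiftTerm θ k f = 0 := by
  induction k generalizing f with
  | zero => omega
  | succ k ih =>
    rw [flatLiftTerm_succ]
    refine Finset.sum_eq_zero fun i _ => ?_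
    rcases k with _ | k
    · rw [(totalDegree_eq_zero_iff_eq_C (p := f)).mp (by omega), pderiv_C, map_zero, zero_mul]
    · rw [ih ((totalDegree_pderiv_le i f).trans_lt (by omega)), zero_mul]

/-- The subtraction `k - 1` truncates at `k = 0`, where the factor `k` kills the term. -/
lemma flatLiftTerm_X_mul (j : Fin n) (k : ℕ) (g : MvPolynomial (Fin n) ℝ) :
    flatLiftTerm θ k (X j * g) =
      LinearMap.mulLeft ℝ (X j) * flatLiftTerm θ k g
        + k • (flatLiftTerm θ (k - 1) g * Dop θ j) := by
  induction k generalizing g with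
  | zero => simp [flatLiftTerm_zero, LinearMap.mulLeft_mul, Module.End.mul_eq_comp]
  | succ k ih =>
    have hX : ∑ i, flatLiftTerm θ k (pderiv i (X j) * g) * Dop θ i =
        flatLiftTerm θ k g * Dop θ j := by
      rw [Finset.sum_eq_single j (fun i _ hij => by simp [pderiv_X_of_ne hij.symm]) (by simp)]
      simp
    have hpred : ∑ i, k • (flatLiftTerm θ (k - 1) (pderiv i g) * Dop θ j) * Dop θ i =
        k • (flatLiftTerm θ k g * Dop θ j) := by
      rcases k with _ | k
      · simp
      · simp only [add_tsub_cancel_right, flatLiftTerm_succ k g, Finset.sum_mul,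
          Finset.smul_sum, smul_mul_assoc, mul_assoc, (Dop_commute θ j _).eq]
    rw [flatLiftTerm_succ, flatLiftTerm_succ]
    simp only [pderiv_mul, map_add, add_mul, Finset.sum_add_distrib, ih, hX, hpred,
      Finset.mul_sum, mul_assoc, succ_nsmul]
    ac_rfl

lemma Dop_mul_flatLiftTerm (j : Fin n) (k : ℕ) (h : MvPolynomial (Fin n) ℝ) :
    Dop θ j * flatLiftTerm θ k h =
      flatLiftTerm θ k h * Dop θ j + flatLiftTerm θ k (Dop θ j h) := by
  induction k generalizing h with
  | zero =>
    refine LinearMap.ext fun q => ?_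
    simp [flatLiftTerm_zero, Dop_leibniz, add_comm]
  | succ k ih =>
    simp only [flatLiftTerm_succ, Finset.mul_sum, Finset.sum_mul, ← mul_assoc, ih, add_mul,
      Finset.sum_add_distrib, pderiv_Dop_comm]
    simp only [mul_assoc, (Dop_commute θ _ j).eq]

lemma moyalTerm_eq_flatLiftTerm_apply (k : ℕ) (f h : MvPolynomial (Fin n) ℝ) :
    moyalTerm θ k f h = (k.factorial : ℝ)⁻¹ • flatLiftTerm θ k f h := by
  simp only [moyalTerm, flatLiftTerm_apply, DComp_eq_sum, LinearMap.sum_apply,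
    Module.End.mul_apply, LinearMap.mulLeft_apply, LinearMap.smul_apply, Finset.mul_sum,
    mul_smul_comm]

lemma flatLift_eq_sum_flatLiftTerm (f : MvPolynomial (Fin n) ℝ) {N : ℕ}
    (hN : f.totalDegree < N) :
    flatLift θ f = ∑ k ∈ Finset.range N, (k.factorial : ℝ)⁻¹ • flatLiftTerm θ k f := by
  simp only [flatLift, ← flatLiftTerm_apply]
  refine Finset.sum_subset (Finset.range_subset_range.mpr hN) fun k _ hk => ?_
  rw [flatLiftTerm_eq_zero_of_totalDegree_lt (by simpa using hk), smul_zero]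

lemma moyal_eq_flatLift_apply (f h : MvPolynomial (Fin n) ℝ) :
    moyal θ f h = flatLift θ f h := by
  simp [moyal, flatLift_eq_sum_flatLiftTerm f (Nat.lt_succ_self _),
    moyalTerm_eq_flatLiftTerm_apply]

lemma flatLift_add (f g : MvPolynomial (Fin n) ℝ) :
    flatLift θ (f + g) = flatLift θ f + flatLift θ g := by
  set N := f.totalDegree + g.totalDegree + 1
  rw [flatLift_eq_sum_flatLiftTerm _ ((totalDegree_add f g).trans_lt (by omega) : _ < N),
    flatLift_eq_sum_flatLiftTerm f (by omega : _ < N),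
    flatLift_eq_sum_flatLiftTerm g (by omega : _ < N)]
  simp only [map_add, smul_add, Finset.sum_add_distrib]

lemma flatLift_smul (a : ℝ) (f : MvPolynomial (Fin n) ℝ) :
    flatLift θ (a • f) = a • flatLift θ f := by
  rw [flatLift_eq_sum_flatLiftTerm _ ((totalDegree_smul_le a f).trans_lt (Nat.lt_succ_self _)),
    flatLift_eq_sum_flatLiftTerm f (Nat.lt_succ_self _)]
  simp only [map_smul, Finset.smul_sum, smul_comm a]

lemma flatLift_C (a : ℝ) : flatLift θ (C a : MvPolynomial (Fin n) ℝ) = a • 1 := by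
  refine LinearMap.ext fun q => ?_
  simp [flatLift_eq_sum_flatLiftTerm (C a) (N := 1) (by simp), flatLiftTerm_zero, smul_eq_C_mul]

lemma flatLift_apply_one (f : MvPolynomial (Fin n) ℝ) : flatLift θ f 1 = f := by
  simp [flatLift_eq_sum_flatLiftTerm f (Nat.lt_succ_self _), Finset.sum_range_succ',
    flatLiftTerm_succ_apply_one, flatLiftTerm_zero]

lemma flatLift_X_mul (j : Fin n) (g : MvPolynomial (Fin n) ℝ) :
    flatLift θ (X j * g) =
      LinearMap.mulLeft ℝ (X j) * flatLift θ g + flatLift θ g * Dop θ j := by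
  set d := g.totalDegree
  have hdeg : (X j * g).totalDegree < d + 2 :=
    (totalDegree_mul _ _).trans_lt (by rw [totalDegree_X]; omega)
  calc flatLift θ (X j * g)
      = ∑ k ∈ Finset.range (d + 2), (k.factorial : ℝ)⁻¹ • flatLiftTerm θ k (X j * g) :=
        flatLift_eq_sum_flatLiftTerm _ hdeg
    _ = LinearMap.mulLeft ℝ (X j) *
          ∑ k ∈ Finset.range (d + 2), (k.factorial : ℝ)⁻¹ • flatLiftTerm θ k g
        + (∑ k ∈ Finset.range (d + 1), (k.factorial : ℝ)⁻¹ • flatLiftTerm θ k g) * Dop θ j := by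
        simp only [flatLiftTerm_X_mul, smul_add, Finset.sum_add_distrib, Finset.mul_sum,
          mul_smul_comm, Finset.sum_mul, smul_mul_assoc]
        congr 1
        rw [Finset.sum_range_succ' _ (d + 1)]
        simp only [Nat.add_sub_cancel, inv_factorial_succ_smul_succ_nsmul, zero_smul, smul_zero,
          add_zero]
    _ = LinearMap.mulLeft ℝ (X j) * flatLift θ g + flatLift θ g * Dop θ j := by
        rw [← flatLift_eq_sum_flatLiftTerm g (by omega),
          ← flatLift_eq_sum_flatLiftTerm g (by omega)]

lemma Dop_mul_flatLift (j : Fin n) (h : MvPolynomial (Fin n) ℝ) :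
    Dop θ j * flatLift θ h = flatLift θ h * Dop θ j + flatLift θ (Dop θ j h) := by
  rw [flatLift_eq_sum_flatLiftTerm h (Nat.lt_succ_self _),
    flatLift_eq_sum_flatLiftTerm (Dop θ j h)
      ((totalDegree_Dop_le θ j h).trans_lt (Nat.lt_succ_self _))]
  simp only [Finset.mul_sum, Finset.sum_mul, mul_smul_comm, smul_mul_assoc, Dop_mul_flatLiftTerm,
    smul_add, Finset.sum_add_distrib]

lemma flatLift_mul_flatLift (f h : MvPolynomial (Fin n) ℝ) :
    flatLift θ f * flatLift θ h = flatLift θ (flatLift θ f h) := by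
  induction f using MvPolynomial.induction_on generalizing h with
  | C a => simp [flatLift_C, flatLift_smul]
  | add f g hf hg => simp [flatLift_add, add_mul, hf, hg]
  | mul_X g j hg =>
    calc flatLift θ (g * X j) * flatLift θ h
        = LinearMap.mulLeft ℝ (X j) * (flatLift θ g * flatLift θ h)
          + flatLift θ g * (Dop θ j * flatLift θ h) := by
          rw [mul_comm g, flatLift_X_mul, add_mul, mul_assoc, mul_assoc]
      _ = flatLift θ (X j * flatLift θ g h) + flatLift θ (flatLift θ g (Dop θ j h)) := by
          rw [Dop_mul_flatLift, mul_add, ← mul_assoc (flatLift θ g), hg, hg, ← add_assoc,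
            ← flatLift_X_mul]
      _ = flatLift θ (flatLift θ (g * X j) h) := by
          rw [← flatLift_add, mul_comm g, flatLift_X_mul]
          rfl

end FlatLift

theorem flatLift_comp_eq_flatLift_moyal_general
    {n : ℕ} (θ : Fin n → Fin n → ℝ)
    (f h : MvPolynomial (Fin n) ℝ) :
    flatLift θ f * flatLift θ h = flatLift θ (moyal θ f h) ∧
    (flatLift θ f * flatLift θ h) 1 = moyal θ f h := by
  rw [moyal_eq_flatLift_apply, flatLift_mul_flatLift]
  exact ⟨rfl, flatLift_apply_one _⟩

/-- For `θ` a constant antisymmetric matrix, the composition of the flat lifts of `f`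
and `h` is again a flat lift, namely the flat lift of the Moyal product `f ⋆ h`; in
particular its zeroth-order term (its value on the constant polynomial `1`) is
`f ⋆ h`. -/
theorem flatLift_comp_eq_flatLift_moyal
    {n : ℕ} (θ : Fin n → Fin n → ℝ) (hanti : ∀ i j, θ i j = -θ j i)
    (f h : MvPolynomial (Fin n) ℝ) :
    flatLift θ f * flatLift θ h = flatLift θ (moyal θ f h) ∧
    (flatLift θ f * flatLift θ h) 1 = moyal θ f h :=
  flatLift_comp_eq_flatLift_moyal_general θ f h
end

section
/- Let g be a positive-definite symmetric n×n real matrix and b an antisymmetric n×n real matrix. Set G = g − b g⁻¹ b and θ = i g⁻¹ b G⁻¹ (as matrices). Then G is symmetric positive-definite, and the quadratic operator identity −g^{ij}∂_i∂_j + 2i g^{ij} b_{jk} ∂_i ξ^k + (g_{ij} − (bg⁻¹b)_{ij}) ξ^i ξ^j = −G^{ij}∂_i∂_j + G_{ij}(ξ^i + θ^{pi}∂_p)(ξ^j + θ^{qj}∂_q) holds, where ξ^i are commuting formal variables commuting with ∂_j. -/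
open Matrix

section OpenStringAux

variable {n : ℕ} {A : Type*} [CommRing A] [Algebra ℂ A]

/-- Auxiliary quadratic form in commuting symbols. -/
def osQF (M : Matrix (Fin n) (Fin n) ℂ) (u v : Fin n → A) : A :=
  ∑ i, ∑ j, M i j • (u i * v j)

lemma osQF_add_left (M : Matrix (Fin n) (Fin n) ℂ) (u u' v : Fin n → A) :
    osQF M (fun i => u i + u' i) v = osQF M u v + osQF M u' v := by
  simp [osQF, add_mul, smul_add, Finset.sum_add_distrib]

lemma osQF_add_right (M : Matrix (Fin n) (Fin n) ℂ) (u v v' : Fin n → A) :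
    osQF M u (fun j => v j + v' j) = osQF M u v + osQF M u v' := by
  simp [osQF, mul_add, smul_add, Finset.sum_add_distrib]

lemma osQF_transpose (M : Matrix (Fin n) (Fin n) ℂ) (u v : Fin n → A) :
    osQF M u v = osQF Mᵀ v u := by
  rw [osQF, osQF, Finset.sum_comm]
  simp [Matrix.transpose_apply, mul_comm]

lemma osQF_subst_right (M N : Matrix (Fin n) (Fin n) ℂ) (u w : Fin n → A) :
    osQF M u (fun j => ∑ q, N q j • w q) = osQF (M * Nᵀ) u w := by
  unfold osQF
  have h : ∀ i j, M i j • (u i * ∑ q, N q j • w q)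
      = ∑ q, (M i j * N q j) • (u i * w q) := by
    intro i j
    rw [Finset.mul_sum, Finset.smul_sum]
    congr 1; ext q
    rw [mul_smul_comm, smul_smul]
  simp only [h]
  congr 1; ext i
  rw [Finset.sum_comm]
  congr 1; ext q
  rw [Matrix.mul_apply, Finset.sum_smul]
  simp [Matrix.transpose_apply]

lemma osQF_subst_left (M N : Matrix (Fin n) (Fin n) ℂ) (w v : Fin n → A) :
    osQF M (fun i => ∑ p, N p i • w p) v = osQF (N * M) w v := by
  rw [osQF_transpose, osQF_subst_right, osQF_transpose, Matrix.transpose_mul,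
    Matrix.transpose_transpose, Matrix.transpose_transpose]

lemma osQF_smul (c : ℂ) (M : Matrix (Fin n) (Fin n) ℂ) (u v : Fin n → A) :
    osQF (c • M) u v = c • osQF M u v := by
  simp [osQF, Finset.smul_sum, smul_smul]

lemma osQF_sub (M N : Matrix (Fin n) (Fin n) ℂ) (u v : Fin n → A) :
    osQF (M - N) u v = osQF M u v - osQF N u v := by
  simp [osQF, sub_smul, Finset.sum_sub_distrib]

end OpenStringAux

/-- Seiberg–Witten open-string metric from a `B`-field.  For `g` a constant
positive-definite symmetric matrix and `bm` a constant antisymmetric matrix, set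
`G = g − b g⁻¹ b` and `θ = i g⁻¹ b G⁻¹`.  Then `G` is symmetric positive definite and,
in the commutative algebra of symbols generated by the commuting variables `∂_i, ξ^j`,
`−g^{ij}∂_i∂_j + 2i g^{ij} b_{jk} ∂_i ξ^k + (g − bg⁻¹b)_{ij} ξ^i ξ^j
  = −G^{ij}∂_i∂_j + G_{ij}(ξ^i + θ^{pi}∂_p)(ξ^j + θ^{qj}∂_q)`. -/
theorem open_string_metric_identity
    {n : ℕ} (g bm : Matrix (Fin n) (Fin n) ℝ)
    (hg : g.PosDef) (hb : bmᵀ = -bm)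
    {A : Type*} [CommRing A] [Algebra ℂ A] (d ξ : Fin n → A) :
    let G : Matrix (Fin n) (Fin n) ℝ := g - bm * g⁻¹ * bm
    let θ : Fin n → Fin n → ℂ := fun p i => Complex.I * ((g⁻¹ * bm * G⁻¹) p i : ℝ)
    G.PosDef ∧ G.IsSymm ∧
    (-(∑ i, ∑ j, ((g⁻¹ i j : ℝ) : ℂ) • (d i * d j))
        + (2 * Complex.I) • (∑ i, ∑ j, ∑ k, (((g⁻¹ i j * bm j k : ℝ)) : ℂ) • (d i * ξ k))
        + ∑ i, ∑ j, ((G i j : ℝ) : ℂ) • (ξ i * ξ j))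
      = (-(∑ i, ∑ j, ((G⁻¹ i j : ℝ) : ℂ) • (d i * d j))
        + ∑ i, ∑ j, ((G i j : ℝ) : ℂ) •
            ((ξ i + ∑ p, θ p i • d p) * (ξ j + ∑ q, θ q j • d q))) := by
  intro G θ
  have hGdef : G = g - bm * g⁻¹ * bm := rfl
  have hgs : gᵀ = g := by
    have := hg.isHermitian.eq
    rwa [Matrix.conjTranspose_eq_transpose_of_trivial] at this
  have hgdet : IsUnit g.det := hg.det_pos.ne'.isUnit
  have hginvs : (g⁻¹)ᵀ = g⁻¹ := by rw [Matrix.transpose_nonsing_inv, hgs]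
  have hGalt : G = g + bmᵀ * g⁻¹ * bm := by
    rw [hGdef, hb, sub_eq_add_neg]
    congr 1
    simp [Matrix.neg_mul]
  have hGpd : G.PosDef := by
    rw [hGalt]
    refine hg.add_posSemidef ?_
    have h1 : (g⁻¹).PosSemidef := hg.inv.posSemidef
    have := h1.conjTranspose_mul_mul_same bm
    rwa [Matrix.conjTranspose_eq_transpose_of_trivial] at this
  have hGs : Gᵀ = G := by
    rw [hGdef]
    simp only [Matrix.transpose_sub, Matrix.transpose_mul, hgs, hginvs, hb]
    congr 1
    simp [Matrix.neg_mul, Matrix.mul_neg, Matrix.mul_assoc]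
  have hGdet : IsUnit G.det := hGpd.det_pos.ne'.isUnit
  have hGinvs : (G⁻¹)ᵀ = G⁻¹ := by rw [Matrix.transpose_nonsing_inv, hGs]
  set T : Matrix (Fin n) (Fin n) ℝ := g⁻¹ * bm * G⁻¹ with hTdef
  have hGiG : G⁻¹ * G = 1 := Matrix.nonsing_inv_mul G hGdet
  have hGGi : G * G⁻¹ = 1 := Matrix.mul_nonsing_inv G hGdet
  have hgig : g⁻¹ * g = 1 := Matrix.nonsing_inv_mul g hgdet
  have hggi : g * g⁻¹ = 1 := Matrix.mul_nonsing_inv g hgdet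
  have hTG : T * G = g⁻¹ * bm := by
    rw [hTdef, Matrix.mul_assoc, hGiG, Matrix.mul_one]
  -- commutation identity
  have hcomm : G * (g⁻¹ * bm) = bm * g⁻¹ * G := by
    rw [hGdef, Matrix.sub_mul, Matrix.mul_sub, ← Matrix.mul_assoc g g⁻¹ bm, hggi,
      Matrix.one_mul, Matrix.mul_assoc bm g⁻¹ g, hgig, Matrix.mul_one]
    congr 1
    simp [Matrix.mul_assoc]
  have hswap : g⁻¹ * bm * G⁻¹ = G⁻¹ * (bm * g⁻¹) := by
    calc g⁻¹ * bm * G⁻¹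
        = G⁻¹ * (G * (g⁻¹ * bm)) * G⁻¹ := by
          rw [← Matrix.mul_assoc G⁻¹ G, hGiG, Matrix.one_mul]
      _ = G⁻¹ * (bm * g⁻¹ * G) * G⁻¹ := by rw [hcomm]
      _ = G⁻¹ * (bm * g⁻¹) := by
          rw [Matrix.mul_assoc G⁻¹ (bm * g⁻¹ * G) G⁻¹,
            Matrix.mul_assoc (bm * g⁻¹) G G⁻¹, hGGi, Matrix.mul_one]
  have hkey : G⁻¹ = g⁻¹ + g⁻¹ * bm * G⁻¹ * bm * g⁻¹ := by
    have h1 : g⁻¹ + g⁻¹ * bm * G⁻¹ * bm * g⁻¹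
        = G⁻¹ * (G + bm * g⁻¹ * bm) * g⁻¹ := by
      rw [hswap]
      rw [Matrix.mul_add, Matrix.add_mul]
      congr 1
      · rw [hGiG, Matrix.one_mul]
      · simp [Matrix.mul_assoc]
    rw [h1]
    have h2 : G + bm * g⁻¹ * bm = g := by rw [hGdef]; abel
    rw [h2, Matrix.mul_assoc, hggi, Matrix.mul_one]
  have hTt : Tᵀ = -(G⁻¹ * (bm * g⁻¹)) := by
    rw [hTdef, Matrix.transpose_mul, Matrix.transpose_mul, hGinvs, hginvs, hb,
      Matrix.neg_mul, Matrix.mul_neg]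
  have hTGT : T * G * Tᵀ = g⁻¹ - G⁻¹ := by
    rw [hTG, hTt, Matrix.mul_neg]
    have h3 : g⁻¹ * bm * (G⁻¹ * (bm * g⁻¹)) = g⁻¹ * bm * G⁻¹ * bm * g⁻¹ := by
      simp [Matrix.mul_assoc]
    have h4 : g⁻¹ * bm * G⁻¹ * bm * g⁻¹ = G⁻¹ - g⁻¹ :=
      eq_sub_of_add_eq (by rw [add_comm]; exact hkey.symm)
    rw [h3, h4]
    abel
  refine ⟨hGpd, hGs, ?_⟩
  -- Complex matrices
  set f : ℝ →+* ℂ := Complex.ofRealHom with hf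
  have hmapsub : ∀ M N : Matrix (Fin n) (Fin n) ℝ,
      (M - N).map f = M.map f - N.map f := fun M N =>
    Matrix.map_sub f (fun a b => by simp) M N
  set gC : Matrix (Fin n) (Fin n) ℂ := (g⁻¹).map f with hgC
  set GC : Matrix (Fin n) (Fin n) ℂ := G.map f with hGC
  set GiC : Matrix (Fin n) (Fin n) ℂ := (G⁻¹).map f with hGiC
  set BC : Matrix (Fin n) (Fin n) ℂ := (g⁻¹ * bm).map f with hBC
  set θC : Matrix (Fin n) (Fin n) ℂ := Complex.I • (T.map f) with hθC
  -- identify the statement's sums with osQF values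
  have e1 : (∑ i, ∑ j, ((g⁻¹ i j : ℝ) : ℂ) • (d i * d j)) = osQF gC d d := rfl
  have e2 : (∑ i, ∑ j, ((G⁻¹ i j : ℝ) : ℂ) • (d i * d j)) = osQF GiC d d := rfl
  have e3 : (∑ i, ∑ j, ((G i j : ℝ) : ℂ) • (ξ i * ξ j)) = osQF GC ξ ξ := rfl
  have e4 : (∑ i, ∑ j, ∑ k, (((g⁻¹ i j * bm j k : ℝ)) : ℂ) • (d i * ξ k))
      = osQF BC d ξ := by
    unfold osQF
    congr 1; ext i
    rw [Finset.sum_comm]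
    congr 1; ext k
    rw [← Finset.sum_smul]
    congr 1
    rw [hBC, Matrix.map_apply, Matrix.mul_apply, map_sum]
    simp [hf]
  have e5 : (∑ i, ∑ j, ((G i j : ℝ) : ℂ) •
        ((ξ i + ∑ p, θ p i • d p) * (ξ j + ∑ q, θ q j • d q)))
      = osQF GC (fun i => ξ i + ∑ p, θC p i • d p)
          (fun j => ξ j + ∑ q, θC q j • d q) := rfl
  rw [e1, e2, e3, e4, e5]
  -- matrix identities over ℂ
  have hGCs : GCᵀ = GC := by rw [hGC, ← Matrix.transpose_map, hGs]
  have hθG : θC * GC = Complex.I • BC := by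
    rw [hθC, Matrix.smul_mul, hGC, ← Matrix.map_mul, hTG, hBC]
  have hθGθ : θC * GC * θCᵀ = GiC - gC := by
    rw [hθG, hθC, Matrix.transpose_smul, Matrix.smul_mul, Matrix.mul_smul, smul_smul,
      Complex.I_mul_I, hBC, ← Matrix.transpose_map, ← Matrix.map_mul, ← hTG, hTGT,
      hmapsub, ← hgC, ← hGiC]
    simp
  -- expand the quadratic form
  rw [osQF_add_left, osQF_add_right, osQF_add_right]
  rw [osQF_subst_right GC θC ξ d, osQF_subst_left GC θC d ξ,
    osQF_subst_left GC θC d (fun j => ∑ q, θC q j • d q),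
    osQF_subst_right (θC * GC) θC d d]
  rw [osQF_transpose (GC * θCᵀ) ξ d, Matrix.transpose_mul, Matrix.transpose_transpose,
    hGCs, hθGθ, hθG, osQF_smul, osQF_sub]
  have htwo : (2 * Complex.I) • osQF BC d ξ
      = Complex.I • osQF BC d ξ + Complex.I • osQF BC d ξ := by
    rw [← smul_smul, two_smul]
  rw [htwo]
  abel
end

section
/- Seiberg–Witten relation: for g symmetric invertible and b antisymmetric with g + b invertible, one has (g + b)⁻¹ = G⁻¹ + Θ where G = g − b g⁻¹ b is the symmetric part and Θ = −g⁻¹ b G⁻¹ = −G⁻¹ b g⁻¹ is the antisymmetric part of (g+b)⁻¹. -/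
open Matrix

/-- Seiberg–Witten relation: for `g` symmetric invertible and `b` antisymmetric with
`g + b` invertible and `G = g − b g⁻¹ b` invertible, one has
`(g + b)⁻¹ = G⁻¹ + Θ`, where `G⁻¹` is the symmetric part and
`Θ = −g⁻¹ b G⁻¹ = −G⁻¹ b g⁻¹` is the antisymmetric part of `(g+b)⁻¹`. -/
theorem seiberg_witten_relation
    {n : ℕ} (g b : Matrix (Fin n) (Fin n) ℝ)
    (hgs : gᵀ = g) (hb : bᵀ = -b)
    (hg : IsUnit g.det) (hgb : IsUnit (g + b).det)
    (hG : IsUnit (g - b * g⁻¹ * b).det) :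
    let G : Matrix (Fin n) (Fin n) ℝ := g - b * g⁻¹ * b
    let Θ : Matrix (Fin n) (Fin n) ℝ := -(g⁻¹ * b * G⁻¹)
    (g + b)⁻¹ = G⁻¹ + Θ ∧
    Θ = -(G⁻¹ * b * g⁻¹) ∧
    (G⁻¹)ᵀ = G⁻¹ ∧ Θᵀ = -Θ := by
  intro G Θ
  have hgg : g * g⁻¹ = 1 := mul_nonsing_inv g hg
  have hgg' : g⁻¹ * g = 1 := nonsing_inv_mul g hg
  have hGG : G * G⁻¹ = 1 := mul_nonsing_inv G hG
  have hGG' : G⁻¹ * G = 1 := nonsing_inv_mul G hG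
  -- key: (g+b) * (G⁻¹ + Θ) = 1
  have key : (g + b) * (G⁻¹ + Θ) = 1 := by
    have : (g + b) * (G⁻¹ + Θ) = (g - b * g⁻¹ * b) * G⁻¹ := by
      simp only [Θ]
      rw [mul_add, mul_neg]
      have : (g + b) * (g⁻¹ * b * G⁻¹) = (g * g⁻¹ * b + b * g⁻¹ * b) * G⁻¹ := by
        noncomm_ring
      rw [this, hgg]
      noncomm_ring
    rw [this, hGG]
  have main : (g + b)⁻¹ = G⁻¹ + Θ := by
    have := inv_eq_right_inv key
    exact this
  -- commuting identity: g⁻¹ * b * G⁻¹ = G⁻¹ * b * g⁻¹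
  have comm : b * g⁻¹ * G = G * (g⁻¹ * b) := by
    show b * g⁻¹ * (g - b * g⁻¹ * b) = (g - b * g⁻¹ * b) * (g⁻¹ * b)
    have h1 : b * g⁻¹ * (g - b * g⁻¹ * b)
        = b * (g⁻¹ * g) - b * g⁻¹ * b * g⁻¹ * b := by noncomm_ring
    have h2 : (g - b * g⁻¹ * b) * (g⁻¹ * b)
        = g * g⁻¹ * b - b * g⁻¹ * b * g⁻¹ * b := by noncomm_ring
    rw [h1, h2, hgg', hgg]; simp
  have comm2 : g⁻¹ * b * G⁻¹ = G⁻¹ * (b * g⁻¹) := by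
    have : G * (g⁻¹ * b * G⁻¹) = G * (G⁻¹ * (b * g⁻¹)) := by
      calc G * (g⁻¹ * b * G⁻¹) = (G * (g⁻¹ * b)) * G⁻¹ := by noncomm_ring
        _ = (b * g⁻¹ * G) * G⁻¹ := by rw [comm]
        _ = b * g⁻¹ * (G * G⁻¹) := by noncomm_ring
        _ = b * g⁻¹ := by rw [hGG]; simp
        _ = G * (G⁻¹ * (b * g⁻¹)) := by rw [← mul_assoc, hGG, one_mul]
    calc g⁻¹ * b * G⁻¹ = 1 * (g⁻¹ * b * G⁻¹) := by simp
      _ = G⁻¹ * G * (g⁻¹ * b * G⁻¹) := by rw [hGG']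
      _ = G⁻¹ * (G * (g⁻¹ * b * G⁻¹)) := by noncomm_ring
      _ = G⁻¹ * (G * (G⁻¹ * (b * g⁻¹))) := by rw [this]
      _ = G⁻¹ * G * G⁻¹ * (b * g⁻¹) := by noncomm_ring
      _ = G⁻¹ * (b * g⁻¹) := by rw [hGG']; simp
  have hΘ2 : Θ = -(G⁻¹ * b * g⁻¹) := by
    simp only [Θ]; rw [comm2, mul_assoc]
  have hginvT : (g⁻¹)ᵀ = g⁻¹ := by rw [transpose_nonsing_inv, hgs]
  have hGT : Gᵀ = G := by
    show (g - b * g⁻¹ * b)ᵀ = g - b * g⁻¹ * b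
    rw [transpose_sub, transpose_mul, transpose_mul, hgs, hb, hginvT]
    noncomm_ring
  have hGinvT : (G⁻¹)ᵀ = G⁻¹ := by rw [transpose_nonsing_inv, hGT]
  have hΘT : Θᵀ = -Θ := by
    have : Θᵀ = G⁻¹ * b * g⁻¹ := by
      show (-(g⁻¹ * b * G⁻¹))ᵀ = _
      rw [transpose_neg, transpose_mul, transpose_mul, hginvT, hb, hGinvT]
      noncomm_ring
    rw [this, hΘ2, mul_assoc]; simp [mul_assoc]
  exact ⟨main, hΘ2, hGinvT, hΘT⟩
end

section
/- Buscher rules as an involution: define the map T on triples (g, b) of metric and B-field components on a circle bundle by ĝ₀₀ = 1/g₀₀, ĝ₀ᵢ = b₀ᵢ/g₀₀, ĝᵢⱼ = gᵢⱼ − (g₀ᵢg₀ⱼ − b₀ᵢb₀ⱼ)/g₀₀, b̂₀ᵢ = g₀ᵢ/g₀₀, b̂ᵢⱼ = bᵢⱼ + (g₀ᵢb₀ⱼ − b₀ᵢg₀ⱼ)/g₀₀. Then T is an involution: applying T twice returns the original (g, b). Moreover if g is positive definite then so is ĝ. -/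
open Matrix

noncomputable section

/-- The Buscher T-duality transform of the metric `g` on a circle bundle
(circle direction indexed by `0`). -/
def buscherG {n : ℕ} (g b : Matrix (Fin (n + 1)) (Fin (n + 1)) ℝ) :
    Matrix (Fin (n + 1)) (Fin (n + 1)) ℝ :=
  fun a c =>
    if a = 0 then
      (if c = 0 then 1 / g 0 0 else b 0 c / g 0 0)
    else
      (if c = 0 then b 0 a / g 0 0
       else g a c - (g 0 a * g 0 c - b 0 a * b 0 c) / g 0 0)

/-- The Buscher T-duality transform of the B-field `b`. -/
def buscherB {n : ℕ} (g b : Matrix (Fin (n + 1)) (Fin (n + 1)) ℝ) :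
    Matrix (Fin (n + 1)) (Fin (n + 1)) ℝ :=
  fun a c =>
    if a = 0 then
      (if c = 0 then 0 else g 0 c / g 0 0)
    else
      (if c = 0 then -(g 0 a / g 0 0)
       else b a c + (g 0 a * b 0 c - b 0 a * g 0 c) / g 0 0)

end

/-
Writing `g₀` for the row `g 0` and `v = (1, b₀₁, …, b₀ₙ)`, the dual metric is the rank-one
update `ĝ = g - g₀ g₀ᵀ / g₀₀ + v vᵀ / g₀₀`. Completing the square in the circle coordinate,
`xᵀ (g - g₀ g₀ᵀ / g₀₀) x = yᵀ g y` with `y = x - ((g x)₀ / g₀₀) e₀`. So for `g > 0` the form of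
`ĝ` is a sum of two nonnegative terms, and the first vanishes only when `x` is a multiple of
`e₀`, where `vᵀ x = x₀ ≠ 0`. That `T` is an involution is entrywise algebra.
-/

section
variable {R ι : Type*} [CommRing R] [Fintype ι] [DecidableEq ι]

theorem Matrix.IsSymm.dotProduct_mulVec_sub_smul_single {A : Matrix ι ι R} (hA : A.IsSymm)
    (x : ι → R) (i : ι) (t : R) :
    (x - t • Pi.single i 1) ⬝ᵥ (A *ᵥ (x - t • Pi.single i 1)) =
      x ⬝ᵥ (A *ᵥ x) - 2 * t * (A *ᵥ x) i + t ^ 2 * A i i := by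
  have hcol : x ⬝ᵥ A.col i = (A *ᵥ x) i := by
    rw [mulVec, dotProduct_comm]
    exact congrArg (· ⬝ᵥ x) (funext fun j => hA.apply i j)
  simp only [mulVec_sub, mulVec_smul, mulVec_single_one, dotProduct_sub, sub_dotProduct,
    dotProduct_smul, smul_dotProduct, single_dotProduct, hcol, smul_eq_mul, col_apply]
  ring

end

section
variable {n : ℕ} (g b : Matrix (Fin (n + 1)) (Fin (n + 1)) ℝ)

def buscherCovector : Fin (n + 1) → ℝ := Fin.cons 1 fun i => b 0 i.succ

theorem buscherG_eq (hg : g.IsSymm) (hg00 : g 0 0 ≠ 0) :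
    buscherG g b = g - (g 0 0)⁻¹ • vecMulVec (g 0) (g 0) +
      (g 0 0)⁻¹ • vecMulVec (buscherCovector b) (buscherCovector b) := by
  ext a c
  cases a using Fin.cases <;> cases c using Fin.cases <;>
    simp [buscherG, buscherCovector, vecMulVec_apply, Fin.succ_ne_zero, hg.apply 0] <;>
    field_simp <;> ring

theorem dotProduct_buscherG_mulVec (hg : g.IsSymm) (hg00 : g 0 0 ≠ 0) (x : Fin (n + 1) → ℝ) :
    x ⬝ᵥ (buscherG g b *ᵥ x) =
      x ⬝ᵥ (g *ᵥ x) - (g *ᵥ x) 0 ^ 2 / g 0 0 + (buscherCovector b ⬝ᵥ x) ^ 2 / g 0 0 := by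
  rw [buscherG_eq g b hg hg00]
  simp only [add_mulVec, sub_mulVec, smul_mulVec, vecMulVec_mulVec, dotProduct_add,
    dotProduct_sub, dotProduct_smul, op_smul_eq_mul, smul_eq_mul]
  rw [dotProduct_comm x (g 0), dotProduct_comm x (buscherCovector b),
    show (g *ᵥ x) 0 = g 0 ⬝ᵥ x from rfl]
  ring

theorem buscherG_posDef (hg : g.PosDef) : (buscherG g b).PosDef := by
  have hgs : g.IsSymm := isHermitian_iff_isSymm.mp hg.isHermitian
  have hg00 : 0 < g 0 0 := hg.diag_pos
  refine .of_dotProduct_mulVec_pos (isHermitian_iff_isSymm.mpr ?_) fun x hx => ?_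
  · rw [buscherG_eq g b hgs hg00.ne', IsSymm]
    simp [transpose_add, transpose_sub, transpose_smul, transpose_vecMulVec, hgs.eq]
  set t := (g *ᵥ x) 0 / g 0 0 with ht
  set y := x - t • Pi.single 0 1 with hy
  have hsquare : x ⬝ᵥ (buscherG g b *ᵥ x) =
      y ⬝ᵥ (g *ᵥ y) + (buscherCovector b ⬝ᵥ x) ^ 2 / g 0 0 := by
    rw [dotProduct_buscherG_mulVec g b hgs hg00.ne', hy, hgs.dotProduct_mulVec_sub_smul_single, ht]
    field_simp
    ring
  rw [star_trivial, hsquare]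
  by_cases hy0 : y = 0
  · have hx0 : x = t • Pi.single 0 1 := sub_eq_zero.mp hy0
    have ht : t ≠ 0 := fun ht => hx (by simpa [ht] using hx0)
    have hv : buscherCovector b ⬝ᵥ x ≠ 0 := by
      simpa [hx0, dotProduct_single, buscherCovector] using ht
    rw [hy0, mulVec_zero, dotProduct_zero, zero_add]
    positivity
  · have hgy := hg.dotProduct_mulVec_pos hy0
    rw [star_trivial] at hgy
    positivity

theorem buscherG_buscherG (hg : g.IsSymm) (hg00 : g 0 0 ≠ 0) :
    buscherG (buscherG g b) (buscherB g b) = g := by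
  ext a c
  cases a using Fin.cases <;> cases c using Fin.cases <;>
    simp [buscherG, buscherB, Fin.succ_ne_zero, hg.apply 0] <;>
    field_simp
  ring

theorem buscherB_buscherB (hb : bᵀ = -b) (hg00 : g 0 0 ≠ 0) :
    buscherB (buscherG g b) (buscherB g b) = b := by
  have hcol (a : Fin (n + 1)) : b a 0 = -b 0 a := by simpa using congrFun₂ hb 0 a
  have hb00 : b 0 0 = 0 := by linarith [hcol 0]
  ext a c
  cases a using Fin.cases <;> cases c using Fin.cases <;>
    simp [buscherG, buscherB, Fin.succ_ne_zero, hb00, hcol (Fin.succ _)] <;>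
    field_simp
  ring

end

/-- The Buscher rules are an involution: applying the T-duality transform twice
returns the original metric and B-field; moreover the dual of a positive-definite
metric is positive definite. -/
theorem buscher_involution
    {n : ℕ} (g b : Matrix (Fin (n + 1)) (Fin (n + 1)) ℝ)
    (hgs : ∀ a c, g a c = g c a) (hb : ∀ a c, b a c = -b c a)
    (hg00 : 0 < g 0 0) :
    buscherG (buscherG g b) (buscherB g b) = g ∧
    buscherB (buscherG g b) (buscherB g b) = b ∧
    (g.PosDef → (buscherG g b).PosDef) := by
  have hg : g.IsSymm := IsSymm.ext fun a c => hgs c a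
  have hb' : bᵀ = -b := by
    ext a c
    exact hb c a
  exact ⟨buscherG_buscherG g b hg hg00.ne', buscherB_buscherB g b hb' hg00.ne',
    buscherG_posDef g b⟩
end

section
/- Curvature of the B-field-deformed connection: in a local frame with ∇_i = ∂_i + A_i and deformed operator D_i = ∂_i + A_i − b_{ij} ad(x^j) acting on partial differential operators (where ad(x^j) is the derivation with ad(x^j)(∂_k) = −δ^j_k, extended as a derivation), the commutator [D_i, D_k] equals (dA + b)_{ik} acting by the adjoint action minus (db)_{ikp} ad(x^p); i.e., the curvature 2-form is F̃ − i_p(db) ad(x^p) with F̃ = dA + b. -/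
/-!
Write `D_i = ∇_i - b_{ij} ad(x^j)`. Three facts about these operators give the commutator:
`∇_i` satisfies the Leibniz rule `∇_i (f P) = (∂_i f) P + f ∇_i P` with respect to multiplication
by functions, it commutes with every `ad(x^j)`, and the `ad(x^j)` are function-linear and commute
with each other. Hence `[D_i, D_k] = [∇_i, ∇_k] - (∂_i b_{kp} - ∂_k b_{ip}) ad(x^p)`. On operators
of order `≤ 1` the adjoint action of a function `F` is `ad_F = (∂_p F) ad(x^p)`, so
`[∇_i, ∇_k] = ad_{(dA)_{ik}}`, and adding and subtracting `ad_{b_{ik}} = (∂_p b_{ik}) ad(x^p)`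
together with the antisymmetry of `b` puts the result in the form `ad_{(dA+b)_{ik}} - (db)_{ikp} ad(x^p)`.
-/

open Finset

section LeibnizCommutator

-- Mathlib keeps this instance local; it provides `sub_lie`, `lie_sum`, … for the ring commutator.
attribute [local instance] LieRing.ofAssociativeRing

variable {𝕜 R M ι κ : Type*} [Semiring 𝕜] [CommRing R] [AddCommGroup M] [Module R M]
  [Module 𝕜 M] [SMulCommClass 𝕜 R M]

theorem lie_smul_of_leibniz {D : Module.End 𝕜 M} {δ : R → R}
    (hD : ∀ (f : R) (P : M), D (f • P) = δ f • P + f • D P) (f : R) (T : Module.End 𝕜 M) :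
    ⁅D, f • T⁆ = δ f • T + f • ⁅D, T⁆ := by
  ext P
  simp only [Ring.lie_def, LinearMap.sub_apply, LinearMap.add_apply, LinearMap.smul_apply,
    Module.End.mul_apply, hD, smul_sub]
  abel

theorem smul_lie_smul_of_smul_comm {T S : Module.End 𝕜 M}
    (hT : ∀ (g : R) (P : M), T (g • P) = g • T P) (hS : ∀ (g : R) (P : M), S (g • P) = g • S P)
    (f g : R) : ⁅f • T, g • S⁆ = (f * g) • ⁅T, S⁆ := by
  ext P
  simp only [Ring.lie_def, LinearMap.sub_apply, LinearMap.smul_apply, Module.End.mul_apply,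
    hT, hS, smul_sub, smul_smul, mul_comm g f]

variable [Fintype κ] {D : ι → Module.End 𝕜 M} {δ : ι → R → R} {X : κ → Module.End 𝕜 M}

theorem lie_sum_smul_of_leibniz (hD : ∀ i (f : R) (P : M), D i (f • P) = δ i f • P + f • D i P)
    (hDX : ∀ i j, ⁅D i, X j⁆ = 0) (i : ι) (g : κ → R) :
    ⁅D i, ∑ p, g p • X p⁆ = ∑ p, δ i (g p) • X p := by
  simp only [lie_sum, lie_smul_of_leibniz (hD i), hDX, smul_zero, add_zero]

theorem lie_sub_sum_smul_of_leibniz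
    (hD : ∀ i (f : R) (P : M), D i (f • P) = δ i f • P + f • D i P)
    (hDX : ∀ i j, ⁅D i, X j⁆ = 0) (hX : ∀ j (g : R) (P : M), X j (g • P) = g • X j P)
    (hXX : ∀ j p, ⁅X j, X p⁆ = 0) (b : ι → κ → R) (i k : ι) :
    ⁅D i - ∑ j, b i j • X j, D k - ∑ p, b k p • X p⁆
      = ⁅D i, D k⁆ - ∑ p, (δ i (b k p) - δ k (b i p)) • X p := by
  have hXsum : ⁅∑ j, b i j • X j, ∑ p, b k p • X p⁆ = 0 := by
    simp only [sum_lie, lie_sum, smul_lie_smul_of_smul_comm (hX _) (hX _), hXX, smul_zero,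
      sum_const_zero]
  rw [sub_lie, lie_sub, lie_sub, hXsum, ← lie_skew (∑ j, _) (D k),
    lie_sum_smul_of_leibniz hD hDX, lie_sum_smul_of_leibniz hD hDX]
  simp only [sub_smul, sum_sub_distrib]
  abel

end LeibnizCommutator

/-! An operator `a + Σ_k c k ∂_k` of order `≤ 1` is encoded as the pair `(a, c)`. -/

namespace OrderOneDiffOp

variable {𝕜 R : Type*} [CommSemiring 𝕜] [CommRing R] [Algebra 𝕜 R] {n : ℕ}

variable (𝕜 R) in
def adX (j : Fin n) : Module.End 𝕜 (R × (Fin n → R)) where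
  toFun P := (-P.2 j, 0)
  map_add' P Q := by ext <;> simp [add_comm]
  map_smul' r P := by ext <;> simp

/-- The adjoint action `P ↦ [∂_i + A, P]` of a connection component. -/
def adConn (δ : Fin n → R →ₗ[𝕜] R) (A : R) (i : Fin n) : Module.End 𝕜 (R × (Fin n → R)) where
  toFun P := (δ i P.1 - ∑ k, P.2 k * δ k A, fun k => δ i (P.2 k))
  map_add' P Q := by
    refine Prod.ext ?_ (funext fun k => map_add (δ i) _ _)
    simp only [Prod.fst_add, Prod.snd_add, Pi.add_apply, map_add, add_mul, sum_add_distrib]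
    abel
  map_smul' r P := by ext <;> simp [smul_sub, smul_sum]

theorem adX_smul (j : Fin n) (f : R) (P : R × (Fin n → R)) :
    adX 𝕜 R j (f • P) = f • adX 𝕜 R j P := by
  ext <;> simp [adX]

theorem sum_smul_adX_apply (g : Fin n → R) (P : R × (Fin n → R)) :
    (∑ p, g p • adX 𝕜 R p) P = (-∑ p, g p * P.2 p, 0) := by
  ext <;> simp [adX, Prod.fst_sum, Prod.snd_sum]

theorem adX_lie_adX (j p : Fin n) : ⁅adX 𝕜 R j, adX 𝕜 R p⁆ = 0 := by
  ext P <;> simp [Ring.lie_def, adX]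

variable (δ : Fin n → R →ₗ[𝕜] R)

theorem adConn_apply (A : R) (i : Fin n) (P : R × (Fin n → R)) :
    adConn δ A i P = (δ i P.1 - ∑ k, P.2 k * δ k A, fun k => δ i (P.2 k)) :=
  rfl

theorem adConn_lie_adX (A : R) (i j : Fin n) : ⁅adConn δ A i, adX 𝕜 R j⁆ = 0 := by
  ext P <;> simp [Ring.lie_def, adX, adConn]

variable {δ} (hLeib : ∀ i (a c : R), δ i (a * c) = a * δ i c + δ i a * c)
include hLeib

theorem adConn_smul (A : R) (i : Fin n) (f : R) (P : R × (Fin n → R)) :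
    adConn δ A i (f • P) = δ i f • P + f • adConn δ A i P := by
  ext
  · simp only [adConn_apply, Prod.smul_fst, Prod.smul_snd, Pi.smul_apply, smul_eq_mul,
      Prod.fst_add, hLeib, mul_sub, Finset.mul_sum, mul_assoc]
    ring
  · simp [adConn, hLeib, add_comm]

theorem adConn_lie_adConn (hδcomm : ∀ i j (a : R), δ i (δ j a) = δ j (δ i a))
    (A : Fin n → R) (i k : Fin n) :
    ⁅adConn δ (A i) i, adConn δ (A k) k⁆ = ∑ p, δ p (δ i (A k) - δ k (A i)) • adX 𝕜 R p := by
  refine LinearMap.ext fun P => Prod.ext ?_ (funext fun m => ?_)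
  · simp only [Ring.lie_def, LinearMap.sub_apply, Module.End.mul_apply, adConn_apply, map_sub,
      map_sum, hLeib, hδcomm, sum_smul_adX_apply, Prod.fst_sub]
    simp only [sum_add_distrib, sub_mul, sum_sub_distrib, mul_comm (P.2 _)]
    ring
  · simp [Ring.lie_def, adConn, adX, Prod.snd_sum, hδcomm]

end OrderOneDiffOp

open OrderOneDiffOp in
/-- Curvature of the B-field-deformed connection on (order ≤ 1) partial differential
operators.  Functions form a commutative algebra `R` with commuting derivations
`δ i = ∂_i`; an order ≤ 1 pdo is a pair `(a, c)` representing `a + Σ_k c k ∂_k`;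
`ad(x^j)(a, c) = (−c j, 0)`, and the adjoint action of the connection `∇_i = ∂_i + A i`
on a pdo is `(a, c) ↦ (∂_i a − Σ_k c k ∂_k(A i), ∂_i c)`.  The deformed covariant
derivative is `D_i = ∂_i + A_i − b_{ij} ad(x^j)`.  Then
`[D_i, D_k] = ad_{(dA+b)_{ik}} − (db)_{ikp} ad(x^p)`, i.e. the curvature is
`F̃ − i_p(db) ad(x^p)` with `F̃ = dA + b`. -/
theorem deformed_connection_curvature
    {R : Type*} [CommRing R] [Algebra ℝ R] (n : ℕ)
    (δ : Fin n → (R →ₗ[ℝ] R))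
    (hLeib : ∀ i (a c : R), δ i (a * c) = a * δ i c + δ i a * c)
    (hδcomm : ∀ i j (a : R), δ i (δ j a) = δ j (δ i a))
    (Av : Fin n → R) (bm : Fin n → Fin n → R)
    (hbanti : ∀ i j, bm i j = -bm j i) :
    let D : Fin n → (R × (Fin n → R)) → (R × (Fin n → R)) := fun i P =>
      (δ i P.1 - (∑ k, P.2 k * δ k (Av i)) + ∑ j, bm i j * P.2 j,
       fun k => δ i (P.2 k))
    ∀ (i k : Fin n) (a : R) (c : Fin n → R),
      D i (D k (a, c)) - D k (D i (a, c))
        = (∑ p, (δ i (bm k p) + δ k (bm p i) + δ p (bm i k)) * c p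
             - ∑ p, c p * δ p (δ i (Av k) - δ k (Av i) + bm i k),
           fun _ => 0) := by
  intro D i k a c
  set E : Fin n → Module.End ℝ (R × (Fin n → R)) :=
    fun i => adConn δ (Av i) i - ∑ j, bm i j • adX ℝ R j
  have hDE : ∀ i P, D i P = E i P := fun i P => by
    rw [LinearMap.sub_apply, sum_smul_adX_apply, adConn_apply, Prod.mk_sub_mk, sub_neg_eq_add,
      sub_zero]
  have hcurv : ⁅E i, E k⁆ = ∑ p, δ p (δ i (Av k) - δ k (Av i)) • adX ℝ R p
      - ∑ p, (δ i (bm k p) - δ k (bm i p)) • adX ℝ R p := by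
    rw [← adConn_lie_adConn hLeib hδcomm]
    exact lie_sub_sum_smul_of_leibniz (fun i => adConn_smul hLeib (Av i) i)
      (fun i => adConn_lie_adX δ (Av i) i) adX_smul adX_lie_adX bm i k
  have hb : ∀ p, δ k (bm p i) = -δ k (bm i p) := fun p => by rw [hbanti p i, map_neg]
  calc D i (D k (a, c)) - D k (D i (a, c)) = ⁅E i, E k⁆ (a, c) := by
        simp only [hDE, Ring.lie_def, LinearMap.sub_apply, Module.End.mul_apply]
    _ = _ := by
      rw [hcurv, LinearMap.sub_apply, sum_smul_adX_apply, sum_smul_adX_apply, Prod.mk_sub_mk,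
        sub_zero]
      congr 1
      simp only [hb, map_add, ← sum_neg_distrib, ← sum_sub_distrib]
      exact sum_congr rfl fun p _ => by ring
end
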